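/- For each 0 ≤ k ≤ ⌊m/2⌋ with 0 ≤ m ≤ n-1, the product (-q^{2n-2};q^{-2})_{m-2k} · ( [n-m+2k-1 choose k]_{q⁴} - [n-m+2k-1 choose k-1]_{q⁴} ) is a polynomial in q of degree exactly m(2n-m-1) - 2k. -/

import Mathlib

open Finset

noncomputable section

/-- The field of rational functions `ℚ(q)`. -/
abbrev K : Type := RatFunc ℚ

/-- The variable `q`. -/
def q : K := RatFunc.X

/-- The Pochhammer symbol `(X;Qb)_r = ∏_{j=0}^{r-1} (1 - X Qb^j)`. -/
def pch (X Qb : K) (r : ℕ) : K := ∏ j ∈ Finset.range r, (1 - X * Qb ^ j)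

/-- The Gaussian binomial coefficient `[a choose b]_Qb = (Qb^a;Qb^{-1})_b / (Qb;Qb)_b`. -/
def gb (a b : ℕ) (Qb : K) : K := pch (Qb ^ a) Qb⁻¹ b / pch Qb Qb b

/-!
Both factors are evaluations of monic polynomials over `ℚ`. The Pochhammer factor is
`∏_{j < m-2k} (1 + q^(2n-2-2j))`. The Gaussian binomials `[a choose b]_Q` are the values at `Q`
of the polynomials given by the `Q`-Pascal recursion, monic of degree `b(a-b)`; for `2k ≤ a`,
`[a choose k]` has strictly larger degree than `[a choose k-1]`, so their difference is monic of
degree `k(a-k)`, here `k(n-m+k-1)` in `Q = q⁴`. The degrees of the monic factors add up to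
`(2n-2)(m-2k) - (m-2k)(m-2k-1) + 4k(n-m+k-1) = m(2n-m-1) - 2k`.
-/

open Polynomial

variable {R : Type*}

section GaussBinom

variable [CommSemiring R]

def gaussBinom : ℕ → ℕ → R[X]
  | _, 0 => 1
  | 0, _ + 1 => 0
  | a + 1, b + 1 => gaussBinom a b + X ^ (b + 1) * gaussBinom a (b + 1)

@[simp]
lemma gaussBinom_zero_right (a : ℕ) : (gaussBinom a 0 : R[X]) = 1 := by
  cases a <;> rfl

lemma gaussBinom_succ_succ (a b : ℕ) :
    (gaussBinom (a + 1) (b + 1) : R[X]) = gaussBinom a b + X ^ (b + 1) * gaussBinom a (b + 1) :=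
  rfl

lemma gaussBinom_eq_zero_of_lt {a b : ℕ} (h : a < b) : (gaussBinom a b : R[X]) = 0 := by
  induction a generalizing b with
  | zero => obtain ⟨b, rfl⟩ := Nat.exists_eq_succ_of_ne_zero h.ne'; rfl
  | succ a ih =>
    obtain ⟨b, rfl⟩ := Nat.exists_eq_succ_of_ne_zero (Nat.ne_zero_of_lt h)
    rw [gaussBinom_succ_succ, ih (by omega), ih (by omega), mul_zero, add_zero]

variable [Nontrivial R]

lemma monic_gaussBinom_and_natDegree {a b : ℕ} (h : b ≤ a) :
    (gaussBinom a b : R[X]).Monic ∧ (gaussBinom a b : R[X]).natDegree = b * (a - b) := by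
  induction a generalizing b with
  | zero =>
    obtain rfl : b = 0 := by omega
    simp
  | succ a ih =>
    rcases b with _ | b
    · simp
    rw [gaussBinom_succ_succ]
    obtain ⟨hm, hd⟩ := ih (Nat.le_of_succ_le_succ h)
    rcases (Nat.le_of_succ_le_succ h).eq_or_lt with rfl | hlt
    · rw [gaussBinom_eq_zero_of_lt (Nat.lt_succ_self b), mul_zero, add_zero]
      simp [hm, hd]
    obtain ⟨hm', hd'⟩ := ih hlt
    have hmX : (X ^ (b + 1) * gaussBinom a (b + 1) : R[X]).Monic := (monic_X_pow _).mul hm'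
    have hdX : (X ^ (b + 1) * gaussBinom a (b + 1) : R[X]).natDegree =
        (b + 1) + (b + 1) * (a - (b + 1)) := by
      rw [(monic_X_pow _).natDegree_mul hm', natDegree_X_pow, hd']
    have hlt' : (gaussBinom a b : R[X]).natDegree <
        (X ^ (b + 1) * gaussBinom a (b + 1) : R[X]).natDegree := by
      rw [hd, hdX]
      obtain ⟨c, rfl⟩ := Nat.exists_eq_add_of_lt hlt
      rw [show b + c + 1 - b = c + 1 by omega, show b + c + 1 - (b + 1) = c by omega]
      nlinarith
    refine ⟨hmX.add_of_right (degree_lt_degree hlt'), ?_⟩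
    rw [natDegree_add_eq_right_of_natDegree_lt hlt', hdX,
      show a + 1 - (b + 1) = a - (b + 1) + 1 by omega]
    ring

lemma monic_gaussBinom {a b : ℕ} (h : b ≤ a) : (gaussBinom a b : R[X]).Monic :=
  (monic_gaussBinom_and_natDegree h).1

lemma natDegree_gaussBinom {a b : ℕ} (h : b ≤ a) :
    (gaussBinom a b : R[X]).natDegree = b * (a - b) :=
  (monic_gaussBinom_and_natDegree h).2

lemma natDegree_gaussBinom_lt_natDegree_gaussBinom_succ {a b : ℕ} (h : 2 * (b + 1) ≤ a) :
    (gaussBinom a b : R[X]).natDegree < (gaussBinom a (b + 1) : R[X]).natDegree := by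
  rw [natDegree_gaussBinom (by omega), natDegree_gaussBinom (by omega)]
  obtain ⟨c, rfl⟩ := Nat.exists_eq_add_of_le h
  rw [show 2 * (b + 1) + c - b = b + 2 + c by omega,
    show 2 * (b + 1) + c - (b + 1) = b + 1 + c by omega]
  nlinarith

end GaussBinom

section GaussBinomDiff

variable [CommRing R]

def gaussBinomDiff (a : ℕ) : ℕ → R[X]
  | 0 => 1
  | b + 1 => gaussBinom a (b + 1) - gaussBinom a b

variable [Nontrivial R]

lemma monic_gaussBinomDiff {a b : ℕ} (h : 2 * b ≤ a) : (gaussBinomDiff a b : R[X]).Monic := by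
  rcases b with _ | b
  · exact monic_one
  · exact (monic_gaussBinom (by omega)).sub_of_left
      (degree_lt_degree (natDegree_gaussBinom_lt_natDegree_gaussBinom_succ h))

lemma natDegree_gaussBinomDiff {a b : ℕ} (h : 2 * b ≤ a) :
    (gaussBinomDiff a b : R[X]).natDegree = b * (a - b) := by
  rcases b with _ | b
  · simp [gaussBinomDiff]
  · exact (natDegree_sub_eq_left_of_natDegree_lt
      (natDegree_gaussBinom_lt_natDegree_gaussBinom_succ h)).trans
      (natDegree_gaussBinom (by omega))

end GaussBinomDiff

section Pochhammer

variable [CommSemiring R]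

lemma monic_one_add_X_pow {e : ℕ} (he : e ≠ 0) : (1 + X ^ e : R[X]).Monic := by
  rw [add_comm, ← C_1]
  exact monic_X_pow_add_C _ he

lemma tsub_mul_ne_zero_of_mem_range {N d r j : ℕ} (h : d * r < N + d) (hj : j ∈ range r) :
    N - d * j ≠ 0 := by
  have : d * (j + 1) ≤ d * r := Nat.mul_le_mul_left d (mem_range.mp hj)
  rw [mul_add_one] at this
  omega

lemma monic_prod_one_add_X_pow {N d r : ℕ} (h : d * r < N + d) :
    (∏ j ∈ range r, (1 + X ^ (N - d * j)) : R[X]).Monic :=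
  monic_prod_of_monic _ _ fun _ hj => monic_one_add_X_pow (tsub_mul_ne_zero_of_mem_range h hj)

lemma natDegree_prod_one_add_X_pow [Nontrivial R] {N d r : ℕ} (h : d * r < N + d) :
    (∏ j ∈ range r, (1 + X ^ (N - d * j)) : R[X]).natDegree =
      ∑ j ∈ range r, (N - d * j) := by
  rw [natDegree_prod_of_monic _ _ fun _ hj =>
    monic_one_add_X_pow (tsub_mul_ne_zero_of_mem_range h hj)]
  exact sum_congr rfl fun j _ => by rw [add_comm, ← C_1, natDegree_X_pow_add_C]

lemma two_mul_sum_range_tsub_mul {N d r : ℕ} (h : d * r ≤ N + d) :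
    2 * ∑ j ∈ range r, (N - d * j) + d * r * r = 2 * r * N + d * r := by
  induction r with
  | zero => simp
  | succ r ih =>
    rw [mul_add_one] at h
    have hr : d * r ≤ N := by omega
    rw [sum_range_succ]
    zify [hr] at ih ⊢
    linear_combination ih (by omega)

end Pochhammer

section RatFunc

lemma pch_succ (x Qb : K) (r : ℕ) : pch x Qb (r + 1) = pch x Qb r * (1 - x * Qb ^ r) :=
  prod_range_succ _ _

lemma aeval_gaussBinom_mul_pch {Q : K} (hQ : Q ≠ 0) (a b : ℕ) :
    aeval Q (gaussBinom a b : ℚ[X]) * pch Q Q b = pch (Q ^ a) Q⁻¹ b := by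
  induction a generalizing b with
  | zero =>
    rcases b with _ | b
    · simp [pch]
    · rw [gaussBinom_eq_zero_of_lt b.succ_pos, map_zero, zero_mul, eq_comm]
      exact prod_eq_zero (mem_range.mpr b.succ_pos) (by simp)
  | succ a ih =>
    rcases b with _ | b
    · simp [pch]
    have hpch : pch (Q ^ (a + 1)) Q⁻¹ (b + 1) = pch (Q ^ a) Q⁻¹ b * (1 - Q ^ (a + 1)) := by
      rw [pch, prod_range_succ', pch, pow_zero, mul_one]
      congr 1
      refine prod_congr rfl fun j _ => ?_
      rw [pow_succ Q, pow_succ Q⁻¹, mul_mul_mul_comm, mul_inv_cancel₀ hQ, mul_one]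
    have hinv : Q ^ b * Q⁻¹ ^ b = 1 := by rw [← mul_pow, mul_inv_cancel₀ hQ, one_pow]
    have ih₁ := ih b
    have ih₂ := ih (b + 1)
    rw [pch_succ Q, pch_succ (Q ^ a)] at ih₂
    rw [gaussBinom_succ_succ, map_add, map_mul, map_pow, aeval_X, hpch, pch_succ Q]
    -- `1 - Q^(a+1) = (1 - Q^(b+1)) + Q^(b+1) (1 - Q^a Q^(-b))`
    linear_combination (1 - Q * Q ^ b) * ih₁ + Q ^ (b + 1) * ih₂ -
      pch (Q ^ a) Q⁻¹ b * Q * Q ^ a * hinv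

lemma q_ne_zero : q ≠ 0 := RatFunc.X_ne_zero

lemma q_pow_ne_one {N : ℕ} (hN : N ≠ 0) : q ^ N ≠ 1 := by
  rw [q, ← RatFunc.algebraMap_X, ← map_pow, ← map_one (algebraMap ℚ[X] K), Ne,
    (RatFunc.algebraMap_injective ℚ).eq_iff]
  exact fun h => hN (by simpa using congrArg natDegree h)

lemma pch_q_pow_self_ne_zero {d : ℕ} (hd : d ≠ 0) (b : ℕ) : pch (q ^ d) (q ^ d) b ≠ 0 := by
  refine prod_ne_zero_iff.mpr fun j _ => sub_ne_zero.mpr fun h => q_pow_ne_one (N := d * (j + 1))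
    (by positivity) ?_
  rw [h, ← pow_succ', ← pow_mul]

lemma gb_q_pow {d : ℕ} (hd : d ≠ 0) (a b : ℕ) :
    gb a b (q ^ d) = aeval (q ^ d) (gaussBinom a b : ℚ[X]) := by
  rw [gb, div_eq_iff (pch_q_pow_self_ne_zero hd b),
    aeval_gaussBinom_mul_pch (pow_ne_zero _ q_ne_zero)]

lemma gb_sub_gb_q_pow {d : ℕ} (hd : d ≠ 0) (a b : ℕ) :
    gb a b (q ^ d) - (if b = 0 then 0 else gb a (b - 1) (q ^ d)) =
      aeval (q ^ d) (gaussBinomDiff a b : ℚ[X]) := by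
  rcases b with _ | b
  · simp [gb, pch, gaussBinomDiff]
  · rw [if_neg b.succ_ne_zero, Nat.add_sub_cancel, gb_q_pow hd, gb_q_pow hd, gaussBinomDiff,
      map_sub]

lemma aeval_q (P : ℚ[X]) : aeval q P = algebraMap ℚ[X] K P := by
  rw [q, ← RatFunc.algebraMap_X, aeval_algebraMap_apply, aeval_X_left_apply]

lemma pch_neg_q_pow_inv {N d r : ℕ} (h : d * r ≤ N + d) :
    pch (-(q ^ N)) (q ^ d)⁻¹ r =
      aeval q (∏ j ∈ range r, (1 + X ^ (N - d * j)) : ℚ[X]) := by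
  rw [pch, map_prod]
  refine prod_congr rfl fun j hj => ?_
  have : d * (j + 1) ≤ d * r := Nat.mul_le_mul_left d (mem_range.mp hj)
  rw [map_add, map_one, map_pow, aeval_X, inv_pow, ← pow_mul, neg_mul, sub_neg_eq_add,
    ← pow_sub₀ _ q_ne_zero (by rw [mul_add_one] at this; omega)]

end RatFunc

lemma summand_degree_eq {n m k S : ℕ} (hm : m ≤ n - 1) (hk : 2 * k ≤ m)
    (hS : 2 * S + 2 * (m - 2 * k) * (m - 2 * k) =
      2 * (m - 2 * k) * (2 * n - 2) + 2 * (m - 2 * k)) :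
    S + k * (n - m + 2 * k - 1 - k) * 4 = m * (2 * n - m - 1) - 2 * k := by
  obtain rfl | hn := Nat.eq_zero_or_pos n
  · obtain ⟨rfl, rfl⟩ : m = 0 ∧ k = 0 := by omega
    simpa using hS
  have hpos : 2 * k ≤ m * (2 * n - m - 1) := hk.trans (Nat.le_mul_of_pos_right m (by omega))
  zify [hk, (by omega : m ≤ 2 * n), (by omega : 1 ≤ 2 * n - m), (by omega : 2 ≤ 2 * n), hpos,
    (by omega : m ≤ n), (by omega : 1 ≤ n - m + 2 * k),
    (by omega : k ≤ n - m + 2 * k - 1)] at hS ⊢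
  linarith

/-- Each summand in the main formula for `h_m^{(n)}(q)`: for `0 ≤ m ≤ n-1` and
`0 ≤ k ≤ ⌊m/2⌋`, the product
`(-q^{2n-2};q^{-2})_{m-2k} · ( [n-m+2k-1 choose k]_{q⁴} - [n-m+2k-1 choose k-1]_{q⁴} )`
is a polynomial in `q` of degree exactly `m(2n-m-1) - 2k`. -/
theorem h_summand_degree (n m k : ℕ) (hm : m ≤ n - 1) (hk : k ≤ m / 2) :
    ∃ P : Polynomial ℚ,
      algebraMap (Polynomial ℚ) K P =
        pch (-(q ^ (2 * n - 2))) ((q ^ 2)⁻¹) (m - 2 * k) *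
          (gb (n - m + 2 * k - 1) k (q ^ 4) -
            if k = 0 then 0 else gb (n - m + 2 * k - 1) (k - 1) (q ^ 4)) ∧
      P.degree = (m * (2 * n - m - 1) - 2 * k : ℕ) := by
  have hexp : 2 * (m - 2 * k) < 2 * n - 2 + 2 := by omega
  have h2k : 2 * k ≤ n - m + 2 * k - 1 := by omega
  have hA := monic_prod_one_add_X_pow (R := ℚ) hexp
  have hG : ((gaussBinomDiff (n - m + 2 * k - 1) k : ℚ[X]).comp (X ^ 4)).Monic :=
    (monic_gaussBinomDiff h2k).comp (monic_X_pow 4) (by norm_num)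
  refine ⟨_ * _, ?_, (degree_eq_natDegree (hA.mul hG).ne_zero).trans ?_⟩
  · rw [← aeval_q, map_mul, aeval_comp, map_pow, aeval_X, ← pch_neg_q_pow_inv hexp.le,
      gb_sub_gb_q_pow (by norm_num)]
  · rw [Nat.cast_inj, hA.natDegree_mul hG, natDegree_prod_one_add_X_pow hexp, natDegree_comp,
      natDegree_X_pow, natDegree_gaussBinomDiff h2k]
    exact summand_degree_eq hm (by omega) (two_mul_sum_range_tsub_mul hexp.le)

end
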